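/- arXiv:2002.00006 — 2 statements merged into one kernel-verified Lean document; each statement's English description precedes it below -/
import Mathlib

section
/- Let m > 1, 0 < s < ς ≤ κ+1 with κ ∈ ℕ₀, and suppose g: ℝ^d → ℂ satisfies |g(ξ)| ≤ g₁ ||ξ||₂^{κ+1} for all ξ. Fix N ∈ ℕ and suppose 0 < ||ξ||₂ ≤ √d π m^N. Then (1+||ξ||₂²)^{−ς} ∑_{j=N}^{∞} m^{2js} |g(m^{−j} ξ)|² ≤ g₁² (√d π)^{2(κ+1−ς)} m^{−2N(ς−s)} / (1 − m^{−2(κ+1−s)}). -/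
open Real

/-- Euclidean norm on `ℝ^d`. -/
noncomputable def euclEnorm {d : ℕ} (x : Fin d → ℝ) : ℝ := Real.sqrt (∑ i, x i ^ 2)

lemma enorm_smul' {d : ℕ} (c : ℝ) (x : Fin d → ℝ) : euclEnorm (c • x) = |c| * euclEnorm x := by
  simp only [euclEnorm, Pi.smul_apply, smul_eq_mul, mul_pow]
  rw [← Finset.mul_sum, Real.sqrt_mul (sq_nonneg c), Real.sqrt_sq_eq_abs]

/-- estimate of `B_{1,N}` in Lemma 2.1 (scalar dilation).  If
`|g(ξ)| ≤ g₁‖ξ‖^{κ+1}`, `1 < m`, `0 < s < ς ≤ κ+1`, and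
`0 < ‖ξ‖₂ ≤ √d π m^N`, then
`(1+‖ξ‖²)^{−ς} ∑_{j≥N} m^{2js} |g(m^{−j}ξ)|²
  ≤ g₁² (√d π)^{2(κ+1−ς)} m^{−2N(ς−s)} / (1 − m^{−2(κ+1−s)})`. -/
theorem B1N_bound (d : ℕ) (m s ς g₁ : ℝ) (κ N : ℕ) (hm : 1 < m) (hs0 : 0 < s)
    (hsς : s < ς) (hςκ : ς ≤ (κ : ℝ) + 1) (g : (Fin d → ℝ) → ℂ)
    (hg : ∀ ξ : Fin d → ℝ, ‖g ξ‖ ≤ g₁ * euclEnorm ξ ^ ((κ : ℝ) + 1))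
    (ξ : Fin d → ℝ) (hξ0 : 0 < euclEnorm ξ)
    (hξ : euclEnorm ξ ≤ Real.sqrt d * π * m ^ (N : ℝ)) :
    (1 + euclEnorm ξ ^ 2) ^ (-ς) *
        (∑' j : ℕ, m ^ (2 * ((N + j : ℕ) : ℝ) * s) *
          ‖g ((m ^ (-((N + j : ℕ) : ℝ))) • ξ)‖ ^ 2) ≤
      g₁ ^ 2 * (Real.sqrt d * π) ^ (2 * ((κ : ℝ) + 1 - ς)) *
        m ^ (-(2 * (N : ℝ) * (ς - s))) / (1 - m ^ (-(2 * ((κ : ℝ) + 1 - s)))) := by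
  have hm0 : (0:ℝ) < m := lt_trans one_pos hm
  set r := euclEnorm ξ with hr_def
  have hr : 0 < r := hξ0
  set p : ℝ := (κ : ℝ) + 1 with hp_def
  have hp : 0 < p := by positivity
  have hps : 0 < p - s := by linarith
  have hg1 : 0 ≤ g₁ := by
    have h1 := (norm_nonneg (g ξ)).trans (hg ξ)
    have h2 : 0 < r ^ p := Real.rpow_pos_of_pos hr p
    nlinarith
  set q : ℝ := m ^ (-(2 * (p - s))) with hq_def
  have hq0 : 0 ≤ q := (Real.rpow_pos_of_pos hm0 _).le
  have hq1 : q < 1 := Real.rpow_lt_one_of_one_lt_of_neg hm (by linarith)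
  have h1q : 0 < 1 - q := by linarith
  set A : ℝ := g₁ ^ 2 * r ^ (2 * p) * m ^ (-(2 * (N : ℝ) * (p - s))) with hA_def
  have hA0 : 0 ≤ A := by positivity
  have hterm : ∀ j : ℕ, m ^ (2 * ((N + j : ℕ) : ℝ) * s) *
      ‖g ((m ^ (-((N + j : ℕ) : ℝ))) • ξ)‖ ^ 2 ≤ A * q ^ j := by
    intro j
    set t : ℝ := ((N + j : ℕ) : ℝ) with ht_def
    have ht : t = (N : ℝ) + j := by push_cast [ht_def]; ring
    have hc : (0:ℝ) < m ^ (-t) := Real.rpow_pos_of_pos hm0 _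
    have hb := hg ((m ^ (-t)) • ξ)
    rw [enorm_smul', abs_of_pos hc, ← hr_def] at hb
    have hb2 : ‖g ((m ^ (-t)) • ξ)‖ ^ 2 ≤ (g₁ * (m ^ (-t) * r) ^ p) ^ 2 :=
      pow_le_pow_left₀ (norm_nonneg _) hb 2
    have key : m ^ (2 * t * s) * (g₁ * (m ^ (-t) * r) ^ p) ^ 2 = A * q ^ j := by
      have e1 : ((m ^ (-t) * r) ^ p) ^ 2 = (m ^ (-t) * r) ^ (2 * p) := by
        rw [pow_two, ← Real.rpow_add (by positivity)]; ring_nf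
      have e2 : (m ^ (-t) * r) ^ (2 * p) = m ^ (-t * (2 * p)) * r ^ (2 * p) := by
        rw [Real.mul_rpow hc.le hr.le, ← Real.rpow_mul hm0.le]
      have e3 : (q : ℝ) ^ j = m ^ (-(2 * (p - s)) * j) := by
        rw [hq_def, ← Real.rpow_natCast (m ^ (-(2 * (p - s)))) j,
          ← Real.rpow_mul hm0.le]
      have e4 : m ^ (2 * t * s) * m ^ (-t * (2 * p)) =
          m ^ (-(2 * (N:ℝ) * (p - s))) * m ^ (-(2 * (p - s)) * (j:ℝ)) := by
        rw [← Real.rpow_add hm0, ← Real.rpow_add hm0]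
        congr 1
        rw [ht]; ring
      calc m ^ (2 * t * s) * (g₁ * (m ^ (-t) * r) ^ p) ^ 2
          = (m ^ (2 * t * s) * m ^ (-t * (2 * p))) * (g₁ ^ 2 * r ^ (2 * p)) := by
            rw [mul_pow, e1, e2]; ring
        _ = (m ^ (-(2 * (N:ℝ) * (p - s))) * m ^ (-(2 * (p - s)) * (j:ℝ))) *
              (g₁ ^ 2 * r ^ (2 * p)) := by rw [e4]
        _ = A * q ^ j := by rw [hA_def, e3]; ring
    calc m ^ (2 * t * s) * ‖g ((m ^ (-t)) • ξ)‖ ^ 2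
        ≤ m ^ (2 * t * s) * (g₁ * (m ^ (-t) * r) ^ p) ^ 2 := by
          apply mul_le_mul_of_nonneg_left hb2 (Real.rpow_pos_of_pos hm0 _).le
      _ = A * q ^ j := key
  have hsum_maj : Summable (fun j : ℕ => A * q ^ j) :=
    (summable_geometric_of_lt_one hq0 hq1).mul_left A
  have hsum : Summable (fun j : ℕ => m ^ (2 * ((N + j : ℕ) : ℝ) * s) *
      ‖g ((m ^ (-((N + j : ℕ) : ℝ))) • ξ)‖ ^ 2) := by
    apply Summable.of_nonneg_of_le (fun j => by positivity) hterm hsum_maj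
  have hts : (∑' j : ℕ, m ^ (2 * ((N + j : ℕ) : ℝ) * s) *
      ‖g ((m ^ (-((N + j : ℕ) : ℝ))) • ξ)‖ ^ 2) ≤ A * (1 - q)⁻¹ := by
    calc _ ≤ ∑' j : ℕ, A * q ^ j := Summable.tsum_le_tsum hterm hsum hsum_maj
      _ = A * (1 - q)⁻¹ := by rw [tsum_mul_left, tsum_geometric_of_lt_one hq0 hq1]
  have hpre : (1 + r ^ 2) ^ (-ς) ≤ r ^ (2 * (-ς)) := by
    have h1 : (r ^ 2 : ℝ) = r ^ ((2:ℕ) : ℝ) := by rw [Real.rpow_natCast]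
    have := Real.rpow_le_rpow_of_nonpos (x := r ^ 2) (by positivity)
      (by linarith [sq_nonneg r] : (r:ℝ) ^ 2 ≤ 1 + r ^ 2) (by linarith : -ς ≤ 0)
    calc (1 + r ^ 2) ^ (-ς) ≤ (r ^ 2) ^ (-ς) := this
      _ = r ^ (2 * (-ς)) := by
          rw [h1, ← Real.rpow_mul hr.le]; norm_num
  have hlhs : (1 + r ^ 2) ^ (-ς) *
        (∑' j : ℕ, m ^ (2 * ((N + j : ℕ) : ℝ) * s) *
          ‖g ((m ^ (-((N + j : ℕ) : ℝ))) • ξ)‖ ^ 2) ≤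
      r ^ (2 * (-ς)) * (A * (1 - q)⁻¹) := by
    have h0 : (0:ℝ) ≤ (1 + r ^ 2) ^ (-ς) := by positivity
    have h1 : (0:ℝ) ≤ ∑' j : ℕ, m ^ (2 * ((N + j : ℕ) : ℝ) * s) *
          ‖g ((m ^ (-((N + j : ℕ) : ℝ))) • ξ)‖ ^ 2 :=
      tsum_nonneg (fun j => by positivity)
    calc (1 + r ^ 2) ^ (-ς) * _ ≤ (1 + r ^ 2) ^ (-ς) * (A * (1 - q)⁻¹) :=
          mul_le_mul_of_nonneg_left hts h0
      _ ≤ r ^ (2 * (-ς)) * (A * (1 - q)⁻¹) :=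
          mul_le_mul_of_nonneg_right hpre (by positivity)
  refine hlhs.trans ?_
  -- now pure algebra/inequality on powers
  have hbd : r ^ (2 * (p - ς)) ≤ (Real.sqrt d * π) ^ (2 * (p - ς)) * m ^ (2 * (N:ℝ) * (p - ς)) := by
    have hmono := Real.rpow_le_rpow hr.le hξ (by linarith : (0:ℝ) ≤ 2 * (p - ς))
    calc r ^ (2 * (p - ς)) ≤ (Real.sqrt d * π * m ^ (N:ℝ)) ^ (2 * (p - ς)) := hmono
      _ = (Real.sqrt d * π) ^ (2 * (p - ς)) * m ^ (2 * (N:ℝ) * (p - ς)) := by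
          rw [Real.mul_rpow (by positivity) (Real.rpow_pos_of_pos hm0 _).le,
            ← Real.rpow_mul hm0.le]
          ring_nf
  have hr2 : r ^ (2 * (-ς)) * A = g₁ ^ 2 * r ^ (2 * (p - ς)) * m ^ (-(2 * (N:ℝ) * (p - s))) := by
    rw [hA_def, show (2 * (p - ς)) = 2 * (-ς) + 2 * p by ring, Real.rpow_add hr]
    ring
  have hfinal : g₁ ^ 2 * r ^ (2 * (p - ς)) * m ^ (-(2 * (N:ℝ) * (p - s))) ≤
      g₁ ^ 2 * (Real.sqrt d * π) ^ (2 * (p - ς)) * m ^ (-(2 * (N:ℝ) * (ς - s))) := by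
    have := mul_le_mul_of_nonneg_left hbd (by positivity : (0:ℝ) ≤ g₁ ^ 2)
    calc g₁ ^ 2 * r ^ (2 * (p - ς)) * m ^ (-(2 * (N:ℝ) * (p - s)))
        ≤ g₁ ^ 2 * ((Real.sqrt d * π) ^ (2 * (p - ς)) * m ^ (2 * (N:ℝ) * (p - ς))) *
            m ^ (-(2 * (N:ℝ) * (p - s))) := by
          apply mul_le_mul_of_nonneg_right _ (Real.rpow_pos_of_pos hm0 _).le
          exact this
      _ = g₁ ^ 2 * (Real.sqrt d * π) ^ (2 * (p - ς)) * m ^ (-(2 * (N:ℝ) * (ς - s))) := by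
          rw [show -(2 * (N:ℝ) * (ς - s)) = 2 * (N:ℝ) * (p - ς) + -(2 * (N:ℝ) * (p - s))
            by ring, Real.rpow_add hm0]
          ring
  calc r ^ (2 * (-ς)) * (A * (1 - q)⁻¹)
      = (r ^ (2 * (-ς)) * A) * (1 - q)⁻¹ := by ring
    _ = (g₁ ^ 2 * r ^ (2 * (p - ς)) * m ^ (-(2 * (N:ℝ) * (p - s)))) * (1 - q)⁻¹ := by
        rw [hr2]
    _ ≤ (g₁ ^ 2 * (Real.sqrt d * π) ^ (2 * (p - ς)) * m ^ (-(2 * (N:ℝ) * (ς - s)))) *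
          (1 - q)⁻¹ := mul_le_mul_of_nonneg_right hfinal (by positivity)
    _ = g₁ ^ 2 * (Real.sqrt d * π) ^ (2 * (p - ς)) *
          m ^ (-(2 * (N:ℝ) * (ς - s))) / (1 - q) := by rw [div_eq_mul_inv]
end

section
/- Let m > 1 and 0 < s < ς. For ξ ∈ ℝ^d with ||ξ||₂ ≥ π m^N, and with Ĵ_ξ := max{0, ⌈log_m(||ξ||₂/π)⌉}, one has (1+||ξ||₂²)^{−ς} ∑_{j=N}^{Ĵ_ξ−1} m^{2js} (1 + m^{−2j}||ξ||₂²)^{ς} ≤ ( (2^ς m^{2s}/π^{2ς}) · 1/(m^{2s}−1) + 2^{ς+1}/(1 − m^{−2(ς−s)}) ) · m^{−2N(ς−s)}. -/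
open Real

/-- Euclidean norm on `ℝ^d`. -/
noncomputable def enorm₂ {d : ℕ} (x : Fin d → ℝ) : ℝ := Real.sqrt (∑ i, x i ^ 2)

lemma aux_one_add_rpow (ς x : ℝ) (hς : 0 < ς) (hx : 0 ≤ x) :
    (1 + x) ^ ς ≤ 2 ^ ς * (1 + x ^ ς) := by
  have h2 : (0:ℝ) < (2:ℝ) ^ ς := Real.rpow_pos_of_pos two_pos ς
  have hxς : (0:ℝ) ≤ x ^ ς := Real.rpow_nonneg hx ς
  rcases le_total x 1 with h | h
  · have h1 : (1 + x) ^ ς ≤ (2:ℝ) ^ ς :=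
      Real.rpow_le_rpow (by linarith) (by linarith) hς.le
    nlinarith
  · have h1 : (1 + x) ^ ς ≤ (2 * x) ^ ς :=
      Real.rpow_le_rpow (by linarith) (by linarith) hς.le
    rw [Real.mul_rpow (by norm_num) hx] at h1
    nlinarith

lemma aux_sum_Ico_int (f : ℤ → ℝ) (a b : ℤ) :
    ∑ j ∈ Finset.Ico a b, f j = ∑ i ∈ Finset.range (b - a).toNat, f (a + i) := by
  rw [show Finset.Ico a b = (Finset.range (b - a).toNat).map
      ⟨fun i : ℕ => a + i, fun i j h => by simpa using h⟩ from ?_, Finset.sum_map]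
  · rfl
  · ext x
    simp only [Finset.mem_map, Finset.mem_range, Finset.mem_Ico,
      Function.Embedding.coeFn_mk]
    constructor
    · rintro ⟨h1, h2⟩
      exact ⟨(x - a).toNat, by omega, by show a + (((x - a).toNat : ℕ) : ℤ) = x; omega⟩
    · rintro ⟨i, hi, rfl⟩
      show a ≤ a + (i:ℤ) ∧ a + (i:ℤ) < b
      omega

set_option maxHeartbeats 1000000 in
/-- estimate of `B_{2,N}` in Lemma 2.1 (scalar dilation).  For
`m > 1`, `0 < s < ς`, `‖ξ‖₂ ≥ π m^N` and `Ĵ_ξ = max{0, ⌈log_m(‖ξ‖₂/π)⌉}`,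
`(1+‖ξ‖²)^{−ς} ∑_{j=N}^{Ĵ_ξ−1} m^{2js}(1+m^{−2j}‖ξ‖²)^ς
 ≤ ((2^ς m^{2s}/π^{2ς}) (1/(m^{2s}−1)) + 2^{ς+1}/(1−m^{−2(ς−s)})) m^{−2N(ς−s)}`. -/
theorem B2N_bound (d : ℕ) (m s ς : ℝ) (N : ℕ) (hm : 1 < m) (hs : 0 < s)
    (hsς : s < ς) (ξ : Fin d → ℝ) (hξ : π * m ^ (N : ℝ) ≤ enorm₂ ξ) :
    (1 + enorm₂ ξ ^ 2) ^ (-ς) *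
        (∑ j ∈ Finset.Ico (N : ℤ) (max 0 ⌈Real.logb m (enorm₂ ξ / π)⌉),
          m ^ (2 * (j : ℝ) * s) * (1 + m ^ (-(2 * (j : ℝ))) * enorm₂ ξ ^ 2) ^ ς) ≤
      ((2 : ℝ) ^ ς * m ^ (2 * s) / π ^ (2 * ς) * (1 / (m ^ (2 * s) - 1)) +
          (2 : ℝ) ^ (ς + 1) / (1 - m ^ (-(2 * (ς - s))))) *
        m ^ (-(2 * (N : ℝ) * (ς - s))) := by
  have hm0 : (0:ℝ) < m := one_pos.trans hm
  have hπ : (0:ℝ) < π := Real.pi_pos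
  have hς : 0 < ς := hs.trans hsς
  set E := enorm₂ ξ with hEdef
  have hmN : (0:ℝ) < m ^ (N:ℝ) := Real.rpow_pos_of_pos hm0 _
  have hE0 : (0:ℝ) < E := lt_of_lt_of_le (by positivity) hξ
  set L := Real.logb m (E / π) with hLdef
  have hEπ : (0:ℝ) < E / π := by positivity
  have hNL : (N:ℝ) ≤ L := by
    rw [hLdef, Real.le_logb_iff_rpow_le hm hEπ, le_div_iff₀ hπ]
    calc m ^ (N:ℝ) * π = π * m ^ (N:ℝ) := mul_comm _ _
      _ ≤ E := hξ
  have hceil : (N:ℤ) ≤ ⌈L⌉ := by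
    have : (N:ℝ) ≤ (⌈L⌉:ℝ) := hNL.trans (Int.le_ceil L)
    exact_mod_cast this
  set J : ℤ := max 0 ⌈L⌉ with hJdef
  have hNJ : (N:ℤ) ≤ J := le_max_of_le_right hceil
  have hJc : J = ⌈L⌉ := max_eq_right (le_trans (by positivity) hceil)
  have hJle : (J:ℝ) ≤ L + 1 := by
    rw [hJc]; exact (Int.ceil_lt_add_one L).le
  set k := (J - (N:ℤ)).toNat with hkdef
  have hkz : (k:ℤ) = J - (N:ℤ) := Int.toNat_of_nonneg (by omega)
  have hkJ : (J:ℝ) = (N:ℝ) + (k:ℝ) := by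
    have : ((J:ℤ):ℝ) = ((N:ℤ):ℝ) + ((k:ℤ):ℝ) := by rw [hkz]; push_cast; ring
    push_cast at this ⊢; linarith
  set r : ℝ := m ^ (2*s) with hrdef
  have hr1 : 1 < r := by
    rw [hrdef]
    exact Real.one_lt_rpow_iff_of_pos hm0 |>.mpr (Or.inl ⟨hm, by positivity⟩)
  set q : ℝ := m ^ (-(2*(ς - s))) with hqdef
  have hq0 : 0 < q := Real.rpow_pos_of_pos hm0 _
  have hq1 : q < 1 := Real.rpow_lt_one_of_one_lt_of_neg hm (by linarith)
  set S1 := ∑ j ∈ Finset.Ico (N:ℤ) J, m ^ (2*(j:ℝ)*s) with hS1def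
  set S2 := ∑ j ∈ Finset.Ico (N:ℤ) J, m ^ (2*(j:ℝ)*(s - ς)) with hS2def
  -- termwise bound
  have hterm : ∀ j ∈ Finset.Ico (N:ℤ) J,
      m ^ (2*(j:ℝ)*s) * (1 + m ^ (-(2*(j:ℝ))) * E^2) ^ ς
        ≤ 2^ς * m ^ (2*(j:ℝ)*s) + 2^ς * E^(2*ς) * m ^ (2*(j:ℝ)*(s - ς)) := by
    intro j _
    have hx : (0:ℝ) ≤ m ^ (-(2*(j:ℝ))) * E^2 := by positivity
    have h1 := aux_one_add_rpow ς _ hς hx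
    have hxpow : (m ^ (-(2*(j:ℝ))) * E^2) ^ ς = m ^ (-(2*(j:ℝ))*ς) * E^(2*ς) := by
      rw [Real.mul_rpow (Real.rpow_nonneg hm0.le _) (by positivity),
        ← Real.rpow_natCast E 2, ← Real.rpow_mul hm0.le, ← Real.rpow_mul hE0.le]
      norm_num
    calc m ^ (2*(j:ℝ)*s) * (1 + m ^ (-(2*(j:ℝ))) * E^2) ^ ς
        ≤ m ^ (2*(j:ℝ)*s) * (2^ς * (1 + (m ^ (-(2*(j:ℝ))) * E^2) ^ ς)) :=
          mul_le_mul_of_nonneg_left h1 (Real.rpow_nonneg hm0.le _)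
      _ = 2^ς * m ^ (2*(j:ℝ)*s)
            + 2^ς * E^(2*ς) * (m ^ (2*(j:ℝ)*s) * m ^ (-(2*(j:ℝ))*ς)) := by
          rw [hxpow]; ring
      _ = 2^ς * m ^ (2*(j:ℝ)*s) + 2^ς * E^(2*ς) * m ^ (2*(j:ℝ)*(s - ς)) := by
          rw [← Real.rpow_add hm0,
            show 2*(j:ℝ)*s + -(2*(j:ℝ))*ς = 2*(j:ℝ)*(s - ς) by ring]
  have hsumsplit :
      (∑ j ∈ Finset.Ico (N:ℤ) J,
          m ^ (2*(j:ℝ)*s) * (1 + m ^ (-(2*(j:ℝ))) * E^2) ^ ς)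
        ≤ 2^ς * S1 + 2^ς * E^(2*ς) * S2 := by
    calc (∑ j ∈ Finset.Ico (N:ℤ) J,
            m ^ (2*(j:ℝ)*s) * (1 + m ^ (-(2*(j:ℝ))) * E^2) ^ ς)
        ≤ ∑ j ∈ Finset.Ico (N:ℤ) J,
            (2^ς * m ^ (2*(j:ℝ)*s) + 2^ς * E^(2*ς) * m ^ (2*(j:ℝ)*(s - ς))) :=
          Finset.sum_le_sum hterm
      _ = 2^ς * S1 + 2^ς * E^(2*ς) * S2 := by
          rw [Finset.sum_add_distrib, ← Finset.mul_sum, ← Finset.mul_sum]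
  -- S1 bound
  have hS1eq : S1 = m ^ (2*(N:ℝ)*s) * ∑ i ∈ Finset.range k, r ^ i := by
    rw [hS1def, aux_sum_Ico_int, ← hkdef, Finset.mul_sum]
    apply Finset.sum_congr rfl
    intro i _
    rw [show (2*((((N:ℤ) + (i:ℤ)):ℤ):ℝ)*s) = 2*(N:ℝ)*s + (2*s)*(i:ℝ) by
      push_cast; ring, Real.rpow_add hm0, Real.rpow_mul hm0.le (2*s) (i:ℝ),
      Real.rpow_natCast (m ^ (2*s)) i, hrdef]
  have hgeom1 : ∑ i ∈ Finset.range k, r ^ i ≤ r ^ k / (r - 1) := by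
    rw [geom_sum_eq hr1.ne' k]
    gcongr
    · linarith
  have hrk : m ^ (2*(N:ℝ)*s) * r ^ k = m ^ (2*(J:ℝ)*s) := by
    rw [hrdef, ← Real.rpow_natCast (m ^ (2*s)) k, ← Real.rpow_mul hm0.le,
      ← Real.rpow_add hm0, hkJ]
    congr 1; ring
  have hmJ : m ^ (2*(J:ℝ)*s) ≤ m ^ (2*s) * (E/π) ^ (2*s) := by
    calc m ^ (2*(J:ℝ)*s) ≤ m ^ ((L+1)*(2*s)) := by
          apply Real.rpow_le_rpow_of_exponent_le hm.le
          nlinarith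
      _ = m ^ (2*s) * (E/π) ^ (2*s) := by
          rw [show (L+1)*(2*s) = 2*s + L*(2*s) by ring, Real.rpow_add hm0,
            Real.rpow_mul hm0.le L (2*s), hLdef, Real.rpow_logb hm0 hm.ne' hEπ]
  have hS1b : S1 ≤ m ^ (2*s) * (E/π) ^ (2*s) / (r - 1) := by
    calc S1 = m ^ (2*(N:ℝ)*s) * ∑ i ∈ Finset.range k, r ^ i := hS1eq
      _ ≤ m ^ (2*(N:ℝ)*s) * (r ^ k / (r - 1)) := by
          apply mul_le_mul_of_nonneg_left hgeom1 (Real.rpow_nonneg hm0.le _)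
      _ = (m ^ (2*(N:ℝ)*s) * r ^ k) / (r - 1) := by ring
      _ ≤ m ^ (2*s) * (E/π) ^ (2*s) / (r - 1) := by
          rw [hrk]; gcongr
  -- S2 bound
  have hS2eq : S2 = m ^ (-(2*(N:ℝ)*(ς - s))) * ∑ i ∈ Finset.range k, q ^ i := by
    rw [hS2def, aux_sum_Ico_int, ← hkdef, Finset.mul_sum]
    apply Finset.sum_congr rfl
    intro i _
    rw [show (2*((((N:ℤ) + (i:ℤ)):ℤ):ℝ)*(s - ς))
        = -(2*(N:ℝ)*(ς - s)) + (-(2*(ς - s)))*(i:ℝ) by push_cast; ring,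
      Real.rpow_add hm0, Real.rpow_mul hm0.le (-(2*(ς - s))) (i:ℝ),
      Real.rpow_natCast (m ^ (-(2*(ς - s)))) i, hqdef]
  have hgeom2 : ∑ i ∈ Finset.range k, q ^ i ≤ 1 / (1 - q) := by
    rw [geom_sum_eq hq1.ne k,
      show (q ^ k - 1) / (q - 1) = (1 - q ^ k) / (1 - q) by
        rw [div_eq_div_iff (by linarith) (by linarith)]; ring]
    gcongr
    · have : (0:ℝ) ≤ q ^ k := pow_nonneg hq0.le k
      linarith
  have hS2b : S2 ≤ m ^ (-(2*(N:ℝ)*(ς - s))) / (1 - q) := by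
    calc S2 = m ^ (-(2*(N:ℝ)*(ς - s))) * ∑ i ∈ Finset.range k, q ^ i := hS2eq
      _ ≤ m ^ (-(2*(N:ℝ)*(ς - s))) * (1 / (1 - q)) := by
          apply mul_le_mul_of_nonneg_left hgeom2 (Real.rpow_nonneg hm0.le _)
      _ = m ^ (-(2*(N:ℝ)*(ς - s))) / (1 - q) := by ring
  -- prefactor bound
  have hpre : (1 + E^2) ^ (-ς) ≤ E ^ (-(2*ς)) := by
    have h1 : (1 + E^2) ^ (-ς) ≤ (E^2) ^ (-ς) := by
      apply Real.rpow_le_rpow_of_nonpos (by positivity) (by nlinarith) (by linarith)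
    calc (1 + E^2) ^ (-ς) ≤ (E^2) ^ (-ς) := h1
      _ = E ^ (-(2*ς)) := by
          rw [← Real.rpow_natCast E 2, ← Real.rpow_mul hE0.le]
          norm_num
  have hS1nonneg : 0 ≤ S1 := Finset.sum_nonneg fun j _ => Real.rpow_nonneg hm0.le _
  have hS2nonneg : 0 ≤ S2 := Finset.sum_nonneg fun j _ => Real.rpow_nonneg hm0.le _
  have h2ς : (0:ℝ) < (2:ℝ) ^ ς := Real.rpow_pos_of_pos two_pos ς
  have hE2ς : (0:ℝ) < E ^ (2*ς) := Real.rpow_pos_of_pos hE0 _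
  have hEm2ς : (0:ℝ) < E ^ (-(2*ς)) := Real.rpow_pos_of_pos hE0 _
  -- main P1
  have hEbound : E ^ (2*s - 2*ς) ≤ π ^ (2*s - 2*ς) * m ^ ((N:ℝ)*(2*s - 2*ς)) := by
    have h := Real.rpow_le_rpow_of_nonpos (show (0:ℝ) < π * m ^ (N:ℝ) by positivity)
      hξ (by linarith : 2*s - 2*ς ≤ 0)
    rwa [Real.mul_rpow hπ.le hmN.le, ← Real.rpow_mul hm0.le] at h
  have hP1 : E ^ (-(2*ς)) * (2^ς * S1)
      ≤ (2:ℝ)^ς * m ^ (2*s) / π ^ (2*ς) * (1/(m ^ (2*s) - 1))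
          * m ^ (-(2*(N:ℝ)*(ς - s))) := by
    have hEE : E ^ (-(2*ς)) * E ^ (2*s) = E ^ (2*s - 2*ς) := by
      rw [← Real.rpow_add hE0]; congr 1; ring
    have hdiv : (E/π) ^ (2*s) = E ^ (2*s) * π ^ (-(2*s)) := by
      rw [Real.div_rpow hE0.le hπ.le, div_eq_mul_inv, ← Real.rpow_neg hπ.le]
    calc E ^ (-(2*ς)) * (2^ς * S1)
        ≤ E ^ (-(2*ς)) * (2^ς * (m ^ (2*s) * (E/π) ^ (2*s) / (r - 1))) := by
          gcongr
      _ = (2^ς * m ^ (2*s) / (r - 1)) * (E ^ (-(2*ς)) * E ^ (2*s)) * π ^ (-(2*s)) := by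
          rw [hdiv]; ring
      _ ≤ (2^ς * m ^ (2*s) / (r - 1))
            * (π ^ (2*s - 2*ς) * m ^ ((N:ℝ)*(2*s - 2*ς))) * π ^ (-(2*s)) := by
          rw [hEE]
          have hA : (0:ℝ) ≤ 2^ς * m ^ (2*s) / (r - 1) := by
            have : (0:ℝ) < r - 1 := by linarith
            positivity
          have hB : (0:ℝ) ≤ π ^ (-(2*s)) := Real.rpow_nonneg hπ.le _
          exact mul_le_mul_of_nonneg_right
            (mul_le_mul_of_nonneg_left hEbound hA) hB
      _ = (2:ℝ)^ς * m ^ (2*s) / π ^ (2*ς) * (1/(m ^ (2*s) - 1))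
            * m ^ (-(2*(N:ℝ)*(ς - s))) := by
          rw [show (N:ℝ)*(2*s - 2*ς) = -(2*(N:ℝ)*(ς - s)) by ring]
          rw [show π ^ (2*s - 2*ς) = π ^ (2*s) * π ^ (-(2*ς)) by
            rw [sub_eq_add_neg, Real.rpow_add hπ]]
          rw [show π ^ (-(2*ς)) = (π ^ (2*ς))⁻¹ by rw [← Real.rpow_neg hπ.le]]
          rw [show π ^ (-(2*s)) = (π ^ (2*s))⁻¹ by rw [← Real.rpow_neg hπ.le]]
          have hπ2s : (π:ℝ) ^ (2*s) ≠ 0 := (Real.rpow_pos_of_pos hπ _).ne'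
          have hπ2ς : (π:ℝ) ^ (2*ς) ≠ 0 := (Real.rpow_pos_of_pos hπ _).ne'
          have hM1 : m ^ (2*s) - 1 ≠ 0 := by
            have : (1:ℝ) < m ^ (2*s) := hr1
            linarith
          rw [hrdef, div_eq_mul_inv, div_eq_mul_inv, one_div]
          linear_combination (2^ς * m ^ (2*s) * (m ^ (2*s) - 1)⁻¹ * (π ^ (2*ς))⁻¹
            * m ^ (-(2*(N:ℝ)*(ς - s)))) * mul_inv_cancel₀ hπ2s
  -- main P2
  have hq1' : (0:ℝ) < 1 - q := by linarith
  have hP2 : E ^ (-(2*ς)) * (2^ς * E^(2*ς) * S2)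
      ≤ (2:ℝ)^(ς+1) / (1 - q) * m ^ (-(2*(N:ℝ)*(ς - s))) := by
    have hEE : E ^ (-(2*ς)) * E ^ (2*ς) = 1 := by
      rw [← Real.rpow_add hE0]; norm_num
    calc E ^ (-(2*ς)) * (2^ς * E^(2*ς) * S2)
        = 2^ς * S2 * (E ^ (-(2*ς)) * E ^ (2*ς)) := by ring
      _ = 2^ς * S2 := by rw [hEE]; ring
      _ ≤ 2^ς * (m ^ (-(2*(N:ℝ)*(ς - s))) / (1 - q)) := by gcongr
      _ ≤ 2^(ς+1) * (m ^ (-(2*(N:ℝ)*(ς - s))) / (1 - q)) := by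
          have hx : (0:ℝ) ≤ m ^ (-(2*(N:ℝ)*(ς - s))) / (1 - q) := by positivity
          exact mul_le_mul_of_nonneg_right
            (Real.rpow_le_rpow_of_exponent_le one_le_two (by linarith)) hx
      _ = (2:ℝ)^(ς+1) / (1 - q) * m ^ (-(2*(N:ℝ)*(ς - s))) := by ring
  -- assemble
  have hbr : 0 ≤ 2^ς * S1 + 2^ς * E^(2*ς) * S2 := by positivity
  calc (1 + E ^ 2) ^ (-ς) *
        (∑ j ∈ Finset.Ico (N:ℤ) J,
          m ^ (2 * (j:ℝ) * s) * (1 + m ^ (-(2 * (j:ℝ))) * E ^ 2) ^ ς)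
      ≤ E ^ (-(2*ς)) * (2^ς * S1 + 2^ς * E^(2*ς) * S2) := by
        apply mul_le_mul hpre hsumsplit (Finset.sum_nonneg fun j _ => by positivity)
          hEm2ς.le
    _ = E ^ (-(2*ς)) * (2^ς * S1) + E ^ (-(2*ς)) * (2^ς * E^(2*ς) * S2) := by ring
    _ ≤ (2:ℝ)^ς * m ^ (2*s) / π ^ (2*ς) * (1/(m ^ (2*s) - 1))
          * m ^ (-(2*(N:ℝ)*(ς - s)))
        + (2:ℝ)^(ς+1) / (1 - q) * m ^ (-(2*(N:ℝ)*(ς - s))) := add_le_add hP1 hP2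
    _ = ((2:ℝ) ^ ς * m ^ (2 * s) / π ^ (2 * ς) * (1 / (m ^ (2 * s) - 1)) +
          (2:ℝ) ^ (ς + 1) / (1 - m ^ (-(2 * (ς - s))))) *
        m ^ (-(2 * (N:ℝ) * (ς - s))) := by rw [hqdef]; ring
end
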